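/- arXiv:2311.06926 — 5 statements merged into one kernel-verified Lean document; each statement's English description precedes it below -/
import Mathlib

section
/- If P₀ = P₀⁻¹Ã (with P₀ := 𝒫₀⁻¹Ã diagonalizable) has spectrum contained in (0,2), then for every k ≥ 1 the matrix P_k := 𝒫_k⁻¹Ã, defined via the recursion 𝒫_{k+1}⁻¹ = 2𝒫_k⁻¹ − 𝒫_k⁻¹ Ã 𝒫_k⁻¹, has spectrum contained in (0,1]. -/
open Matrix

/-!
Writing `X_k := 𝒫_k⁻¹ Ã`, the recursion gives `X_{k+1} = 2 X_k - X_k²`, so every `X_k` is a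
polynomial in `X_0` and is diagonalised by the same matrix, the eigenvalues evolving by the scalar
map `x ↦ 2x - x²`. Since `1 - (2x - x²) = (1 - x)²`, this map sends `(0, 2)` into `(0, 1]`.
-/

section NewtonStep

variable {R : Type*} [Ring R]

/-- The map induced on `X Ã` by the Newton–Schulz step `X ↦ 2X - X Ã X`. -/
def newtonStep (x : R) : R := (2 : ℕ) • x - x * x

lemma sub_mul_mul_mul_eq_newtonStep (x a : R) : (2 • x - x * a * x) * a = newtonStep (x * a) := by
  simp only [newtonStep, sub_mul, smul_mul_assoc, mul_assoc]

lemma newtonStep_units_conj (u : Rˣ) (x : R) :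
    newtonStep (u * x * ↑u⁻¹) = u * newtonStep x * ↑u⁻¹ := by
  have hsq : (u * x * ↑u⁻¹) * (u * x * ↑u⁻¹) = u * (x * x) * ↑u⁻¹ := by
    simp only [mul_assoc, Units.inv_mul_cancel_left]
  simp only [newtonStep, hsq, mul_sub, sub_mul, mul_smul_comm, smul_mul_assoc]

lemma newtonStep_diagonal {n : Type*} [Fintype n] [DecidableEq n] (d : n → R) :
    newtonStep (diagonal d) = diagonal (newtonStep ∘ d) := by
  rw [newtonStep, diagonal_mul_diagonal, ← diagonal_smul, diagonal_sub]
  rfl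

end NewtonStep

lemma newtonStep_mapsTo_Ioo_Ioc : Set.MapsTo (newtonStep : ℝ → ℝ) (Set.Ioo 0 2) (Set.Ioc 0 1) := by
  rintro x ⟨hx0, hx2⟩
  rw [show newtonStep x = 1 - (1 - x) ^ 2 by rw [newtonStep, two_nsmul]; ring]
  constructor <;> nlinarith

lemma newtonStep_mapsTo_Ioo : Set.MapsTo (newtonStep : ℝ → ℝ) (Set.Ioo 0 2) (Set.Ioo 0 2) :=
  fun _ hx ↦ Set.Ioc_subset_Ioo_right one_lt_two (newtonStep_mapsTo_Ioo_Ioc hx)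

theorem hyperpower_spectrum_Ioc_general {N : ℕ}
    (At : Matrix (Fin N) (Fin N) ℝ)
    (Pinv : ℕ → Matrix (Fin N) (Fin N) ℝ)
    (hrec : ∀ k, Pinv (k + 1) = 2 • Pinv k - Pinv k * At * Pinv k)
    (hdiag : ∃ (U D : Matrix (Fin N) (Fin N) ℝ),
      IsUnit U ∧ D.IsDiag ∧ Pinv 0 * At = U * D * U⁻¹)
    (hspec : spectrum ℝ (Pinv 0 * At) ⊆ Set.Ioo (0 : ℝ) 2) :
    ∀ k ≥ 1, spectrum ℝ (Pinv k * At) ⊆ Set.Ioc (0 : ℝ) 1 := by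
  obtain ⟨_, D, ⟨u, rfl⟩, hD, hfact⟩ := hdiag
  have hconj : ∀ k, Pinv k * At =
      u * diagonal (newtonStep^[k] ∘ D.diag) * (↑u⁻¹ : Matrix (Fin N) (Fin N) ℝ) := by
    intro k
    induction k with
    | zero => rwa [coe_units_inv, Function.iterate_zero, Function.id_comp, hD.diagonal_diag]
    | succ k ih =>
      rw [hrec, sub_mul_mul_mul_eq_newtonStep, ih, newtonStep_units_conj, newtonStep_diagonal,
        Function.iterate_succ', Function.comp_assoc]
  have hspec_eq : ∀ k, spectrum ℝ (Pinv k * At) = Set.range (newtonStep^[k] ∘ D.diag) := by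
    intro k
    rw [hconj, spectrum.units_conjugate, spectrum_diagonal]
  have hD_mem : ∀ i, D.diag i ∈ Set.Ioo (0 : ℝ) 2 :=
    fun i ↦ hspec (by rw [hspec_eq 0]; exact ⟨i, rfl⟩)
  intro k hk
  obtain ⟨m, rfl⟩ := Nat.exists_eq_add_of_le' hk
  rw [hspec_eq]
  rintro _ ⟨i, rfl⟩
  rw [Function.comp_apply, Function.iterate_succ_apply']
  exact newtonStep_mapsTo_Ioo_Ioc (newtonStep_mapsTo_Ioo.iterate m (hD_mem i))

/-- If `P₀ = 𝒫₀⁻¹At` is diagonalizable with spectrum in (0,2), then for every `k ≥ 1`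
the matrix `P_k = 𝒫_k⁻¹At`, generated by `𝒫_{k+1}⁻¹ = 2𝒫_k⁻¹ − 𝒫_k⁻¹ At 𝒫_k⁻¹`,
has spectrum contained in (0,1]. -/
theorem hyperpower_spectrum_Ioc {N : ℕ}
    (P0 At : Matrix (Fin N) (Fin N) ℝ) (hP0 : P0.PosDef)
    (Pinv : ℕ → Matrix (Fin N) (Fin N) ℝ)
    (h0 : Pinv 0 = P0⁻¹)
    (hrec : ∀ k, Pinv (k + 1) = 2 • Pinv k - Pinv k * At * Pinv k)
    (hdiag : ∃ (U D : Matrix (Fin N) (Fin N) ℝ),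
      IsUnit U ∧ D.IsDiag ∧ Pinv 0 * At = U * D * U⁻¹)
    (hspec : spectrum ℝ (Pinv 0 * At) ⊆ Set.Ioo (0 : ℝ) 2) :
    ∀ k ≥ 1, spectrum ℝ (Pinv k * At) ⊆ Set.Ioc (0 : ℝ) 1 :=
  hyperpower_spectrum_Ioc_general At Pinv hrec hdiag hspec
end

section
/- Under the recursion 𝒫_{k+1}⁻¹ = 2𝒫_k⁻¹ − 𝒫_k⁻¹ Ã 𝒫_k⁻¹, the spectrum of P_{k+1} := 𝒫_{k+1}⁻¹Ã is the image of the spectrum of P_k := 𝒫_k⁻¹Ã under the map l(λ) = 2λ − λ², i.e. σ(P_{k+1}) = { 2λ − λ² : λ ∈ σ(P_k) }. -/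
/-!
Multiplying the recursion on the right by `Ã` gives `P_{k+1} = 2 P_k - P_k² = ℓ(P_k)` for the
polynomial `ℓ = 2X - X²`. Conjugation by a fixed unit commutes with polynomial evaluation, so
`ℓ(U diag(d) U⁻¹) = U diag(ℓ ∘ d) U⁻¹`: every `P_k` is diagonalized by the same `U`, and its
spectrum is read off the diagonal. Diagonalizability is what makes the spectral mapping theorem
hold over `ℝ`: a matrix with eigenvalues `1 ± i` has empty real spectrum, while `ℓ` of it has
real spectrum `{2}`.
-/

open Matrix Polynomial

theorem Polynomial.aeval_units_conj {R A : Type*} [CommSemiring R] [Ring A] [Algebra R A]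
    (u : Aˣ) (a : A) (p : R[X]) : aeval (↑u * a * ↑u⁻¹ : A) p = u * aeval a p * ↑u⁻¹ := by
  simpa [ConjAct.units_smul_def] using
    aeval_algHom_apply (MulSemiringAction.toAlgHom R A (ConjAct.toConjAct u)) a p

theorem hyperpower_mul_eq_aeval {R A : Type*} [CommRing R] [Ring A] [Algebra R A] (Q M : A) :
    (2 • Q - Q * M * Q) * M = aeval (Q * M) (2 * X - X ^ 2 : R[X]) := by
  simp only [map_sub, map_mul, map_pow, aeval_X, map_ofNat]
  noncomm_ring

namespace Matrix

variable {n R : Type*} [Fintype n] [DecidableEq n] [CommRing R]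

def IsDiagonalizable (A : Matrix n n R) : Prop :=
  ∃ (u : (Matrix n n R)ˣ) (d : n → R), A = u * diagonal d * (↑u⁻¹ : Matrix n n R)

theorem aeval_diagonal (d : n → R) (p : R[X]) :
    aeval (diagonal d) p = diagonal fun i => p.eval (d i) := by
  simpa [aeval_pi_apply] using aeval_algHom_apply (diagonalAlgHom R) d p

theorem IsDiag.isDiagonalizable_conj {U D : Matrix n n R} (hD : D.IsDiag) (hU : IsUnit U) :
    (U * D * U⁻¹).IsDiagonalizable := by
  obtain ⟨u, rfl⟩ := hU
  exact ⟨u, D.diag, by rw [hD.diagonal_diag, coe_units_inv]⟩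

namespace IsDiagonalizable

theorem aeval {A : Matrix n n R} (hA : A.IsDiagonalizable) (p : R[X]) :
    (aeval A p).IsDiagonalizable := by
  obtain ⟨u, d, rfl⟩ := hA
  exact ⟨u, _, by rw [aeval_units_conj, aeval_diagonal]⟩

theorem spectrum_aeval {K : Type*} [Field K] {A : Matrix n n K} (hA : A.IsDiagonalizable)
    (p : K[X]) : spectrum K (Polynomial.aeval A p) = p.eval '' spectrum K A := by
  obtain ⟨u, d, rfl⟩ := hA
  rw [aeval_units_conj, aeval_diagonal, spectrum.units_conjugate, spectrum.units_conjugate,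
    spectrum_diagonal, spectrum_diagonal, ← Set.range_comp]
  rfl

end IsDiagonalizable

end Matrix

theorem hyperpower_spectrum_image_general {N : ℕ}
    (At : Matrix (Fin N) (Fin N) ℝ)
    (Pinv : ℕ → Matrix (Fin N) (Fin N) ℝ)
    (hrec : ∀ k, Pinv (k + 1) = 2 • Pinv k - Pinv k * At * Pinv k)
    (hdiag : ∃ (U D : Matrix (Fin N) (Fin N) ℝ),
      IsUnit U ∧ D.IsDiag ∧ Pinv 0 * At = U * D * U⁻¹) :
    ∀ k, spectrum ℝ (Pinv (k + 1) * At) =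
      (fun lam : ℝ => 2 * lam - lam ^ 2) '' spectrum ℝ (Pinv k * At) := by
  have hstep (k : ℕ) : Pinv (k + 1) * At = aeval (Pinv k * At) (2 * X - X ^ 2 : ℝ[X]) := by
    rw [hrec, hyperpower_mul_eq_aeval (R := ℝ)]
  have hdiagonalizable (k : ℕ) : (Pinv k * At).IsDiagonalizable := by
    induction k with
    | zero =>
      obtain ⟨U, D, hU, hD, hUD⟩ := hdiag
      exact hUD ▸ hD.isDiagonalizable_conj hU
    | succ k ih => exact hstep k ▸ ih.aeval _
  intro k
  rw [hstep, (hdiagonalizable k).spectrum_aeval]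
  simp

/-- Under the recursion `𝒫_{k+1}⁻¹ = 2𝒫_k⁻¹ − 𝒫_k⁻¹ Ã 𝒫_k⁻¹`, the spectrum of
`P_{k+1} = 𝒫_{k+1}⁻¹Ã` is the image of the spectrum of `P_k` under `l(λ) = 2λ − λ²`. -/
theorem hyperpower_spectrum_image {N : ℕ}
    (P0 At : Matrix (Fin N) (Fin N) ℝ) (hP0 : IsUnit P0)
    (Pinv : ℕ → Matrix (Fin N) (Fin N) ℝ)
    (h0 : Pinv 0 = P0⁻¹)
    (hrec : ∀ k, Pinv (k + 1) = 2 • Pinv k - Pinv k * At * Pinv k)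
    (hdiag : ∃ (U D : Matrix (Fin N) (Fin N) ℝ),
      IsUnit U ∧ D.IsDiag ∧ Pinv 0 * At = U * D * U⁻¹) :
    ∀ k, spectrum ℝ (Pinv (k + 1) * At) =
      (fun lam : ℝ => 2 * lam - lam ^ 2) '' spectrum ℝ (Pinv k * At) :=
  hyperpower_spectrum_image_general At Pinv hrec hdiag
end

section
/- If 0 < λ_min ≤ λ_max ≤ 1 with λ_min < λ_max, and λ'_min = l(λ_min), λ'_max = l(λ_max) with l(λ) = 2λ − λ², then 1 < λ'_max/λ'_min < λ_max/λ_min; that is, the condition number κ(P_k) = λ_{k,max}/λ_{k,min} strictly decreases under each hyper-power update while remaining greater than 1. -/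
/-! Write `l(λ) = 2λ - λ² = λ (2 - λ)`. Since `l(b) - l(a) = (b - a)(2 - a - b)`, `l` is strictly
increasing below `1`, which gives the lower bound `1`. Since `l(λ)/λ = 2 - λ` is decreasing,
`l(b)/l(a) = (b/a) · (2 - b)/(2 - a)` is `b/a` times a factor smaller than `1`. -/

lemma two_mul_sub_sq_pos {x : ℝ} (h0 : 0 < x) (h2 : x < 2) : 0 < 2 * x - x ^ 2 := by
  linear_combination mul_pos h0 (sub_pos.2 h2)

lemma two_mul_sub_sq_lt_two_mul_sub_sq {a b : ℝ} (hab : a < b) (hsum : a + b < 2) :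
    2 * a - a ^ 2 < 2 * b - b ^ 2 := by
  have hprod : 0 < (b - a) * (2 - a - b) := mul_pos (sub_pos.2 hab) (by linarith)
  linear_combination hprod

lemma div_two_mul_sub_sq_lt_div {a b : ℝ} (ha : 0 < a) (hab : a < b) (hb : b < 2) :
    (2 * b - b ^ 2) / (2 * a - a ^ 2) < b / a := by
  have ha2 : 0 < 2 - a := by linarith
  have hfactor : (2 - b) / (2 - a) < 1 := (div_lt_one ha2).2 (by linarith)
  calc (2 * b - b ^ 2) / (2 * a - a ^ 2) = b / a * ((2 - b) / (2 - a)) := by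
        field_simp
    _ < b / a := mul_lt_of_lt_one_right (div_pos (ha.trans hab) ha) hfactor

/-- The condition number strictly decreases under a hyper-power update while
staying above 1: if `0 < λmin < λmax ≤ 1` and `l(λ) = 2λ − λ²`, then
`1 < l(λmax)/l(λmin) < λmax/λmin`. -/
theorem condition_number_decreases
    (lmin lmax : ℝ) (h0 : 0 < lmin) (hlt : lmin < lmax) (h1 : lmax ≤ 1) :
    1 < (2 * lmax - lmax ^ 2) / (2 * lmin - lmin ^ 2) ∧
    (2 * lmax - lmax ^ 2) / (2 * lmin - lmin ^ 2) < lmax / lmin := by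
  have hmax : lmax < 2 := by linarith
  have hpos : 0 < 2 * lmin - lmin ^ 2 := two_mul_sub_sq_pos h0 (hlt.trans hmax)
  exact ⟨(one_lt_div hpos).2 (two_mul_sub_sq_lt_two_mul_sub_sq hlt (by linarith)),
    div_two_mul_sub_sq_lt_div h0 hlt hmax⟩
end

section
/- Let M_k = L_k L_kᵀ be Cholesky factorizations of symmetric positive definite matrices M₁,…,M_d and define the generalized Kronecker sum A₁ ⊕̂ ⋯ ⊕̂ A_d := ∑_k M_d ⊗ ⋯ ⊗ A_k ⊗ ⋯ ⊗ M₁. Then with L = L_d ⊗ ⋯ ⊗ L₁, one has L⁻¹ (A₁ ⊕̂ ⋯ ⊕̂ A_d) L⁻ᵀ = Ã₁ ⊕ ⋯ ⊕ Ã_d, where Ã_k = L_k⁻¹ A_k L_k⁻ᵀ; i.e. a generalized Kronecker sum is congruent to an ordinary Kronecker sum. -/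
open Matrix

/-- The Kronecker product of a family of square matrices on the product index type. -/
def kronFamily {d : ℕ} {n : Fin d → ℕ}
    (A : ∀ k, Matrix (Fin (n k)) (Fin (n k)) ℝ) :
    Matrix (∀ k, Fin (n k)) (∀ k, Fin (n k)) ℝ :=
  fun i j => ∏ k, A k (i k) (j k)

/-- Ordinary Kronecker sum: `A k` in slot `k`, identities elsewhere. -/
def kronSum {d : ℕ} {n : Fin d → ℕ}
    (A : ∀ k, Matrix (Fin (n k)) (Fin (n k)) ℝ) :
    Matrix (∀ k, Fin (n k)) (∀ k, Fin (n k)) ℝ :=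
  ∑ k, kronFamily (fun l => if l = k then A l else (1 : Matrix (Fin (n l)) (Fin (n l)) ℝ))

/-- Generalized Kronecker sum: `A k` in slot `k`, the matrices `M` elsewhere. -/
def genKronSum {d : ℕ} {n : Fin d → ℕ}
    (A M : ∀ k, Matrix (Fin (n k)) (Fin (n k)) ℝ) :
    Matrix (∀ k, Fin (n k)) (∀ k, Fin (n k)) ℝ :=
  ∑ k, kronFamily (fun l => if l = k then A l else M l)

/-! By the mixed-product rule, congruence by `L = L_d ⊗ ⋯ ⊗ L₁` acts slot by slot on every
term of the generalized Kronecker sum, and in the off slots it sends `M_k = L_k L_kᵀ` to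
`L_k⁻¹ M_k L_k⁻ᵀ = 1`. -/

lemma kronFamily_mul {d : ℕ} {n : Fin d → ℕ}
    (A B : ∀ k, Matrix (Fin (n k)) (Fin (n k)) ℝ) :
    kronFamily A * kronFamily B = kronFamily (fun k => A k * B k) := by
  ext i j
  simp only [kronFamily, mul_apply]
  rw [Finset.prod_univ_sum]
  exact Finset.sum_congr rfl fun l _ => Finset.prod_mul_distrib.symm

lemma kronFamily_mul_genKronSum_mul {d : ℕ} {n : Fin d → ℕ}
    (P A M Q : ∀ k, Matrix (Fin (n k)) (Fin (n k)) ℝ) :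
    kronFamily P * genKronSum A M * kronFamily Q =
      genKronSum (fun k => P k * A k * Q k) (fun k => P k * M k * Q k) := by
  simp only [genKronSum, Finset.mul_sum, Finset.sum_mul, kronFamily_mul]
  refine Finset.sum_congr rfl fun k _ => congrArg kronFamily (funext fun l => ?_)
  split_ifs <;> rfl

lemma genKronSum_one {d : ℕ} {n : Fin d → ℕ}
    (A : ∀ k, Matrix (Fin (n k)) (Fin (n k)) ℝ) :
    genKronSum A (fun _ => 1) = kronSum A :=
  rfl

lemma inv_mul_mul_inv_transpose_of_eq_mul_transpose {R m : Type*} [CommRing R] [Fintype m]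
    [DecidableEq m] {M L : Matrix m m R} (hM : IsUnit M.det) (hL : M = L * Lᵀ) :
    L⁻¹ * M * L⁻¹ᵀ = 1 := by
  have hLdet : IsUnit L.det := by
    rw [hL, det_mul, det_transpose] at hM
    exact isUnit_of_mul_isUnit_left hM
  rw [hL, nonsing_inv_mul_cancel_left _ _ hLdet, transpose_nonsing_inv,
    mul_nonsing_inv _ (by rwa [det_transpose])]

theorem genKronSum_congruent_general {d : ℕ} {n : Fin d → ℕ}
    (A M L : ∀ k, Matrix (Fin (n k)) (Fin (n k)) ℝ)
    (hM : ∀ k, (M k).PosDef)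
    (hL : ∀ k, M k = L k * (L k)ᵀ) :
    kronFamily (fun k => (L k)⁻¹) * genKronSum A M *
        kronFamily (fun k => ((L k)⁻¹)ᵀ) =
      kronSum (fun k => (L k)⁻¹ * A k * ((L k)⁻¹)ᵀ) := by
  have hML : ∀ k, (L k)⁻¹ * M k * (L k)⁻¹ᵀ = 1 := fun k =>
    inv_mul_mul_inv_transpose_of_eq_mul_transpose
      ((isUnit_iff_isUnit_det _).mp (hM k).isUnit) (hL k)
  rw [kronFamily_mul_genKronSum_mul, ← genKronSum_one]
  simp only [hML]

/-- A generalized Kronecker sum built with SPD matrices `M_k = L_k L_kᵀ` is congruent,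
via `L = L_d ⊗ ⋯ ⊗ L₁`, to the ordinary Kronecker sum of `Ã_k = L_k⁻¹ A_k L_k⁻ᵀ`. -/
theorem genKronSum_congruent {d : ℕ} {n : Fin d → ℕ}
    (A M L : ∀ k, Matrix (Fin (n k)) (Fin (n k)) ℝ)
    (hM : ∀ k, (M k).PosDef)
    (hL : ∀ k, M k = L k * (L k)ᵀ)
    (hLtri : ∀ k, ∀ i j : Fin (n k), i < j → L k i j = 0) :
    kronFamily (fun k => (L k)⁻¹) * genKronSum A M *
        kronFamily (fun k => ((L k)⁻¹)ᵀ) =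
      kronSum (fun k => (L k)⁻¹ * A k * ((L k)⁻¹)ᵀ) :=
  genKronSum_congruent_general A M L hM hL
end

section
/- Suppose 𝒫₀ is positive definite, Ã positive definite, and σ(𝒫₀⁻¹Ã) ⊂ (0,2). Then along the hyper-power preconditioner sequence, λ_{k+1,min} = l(λ_{k,min}) for k ≥ 1 and the sequence λ_{k,min} (k ≥ 1) is strictly increasing and converges to 1, where l(λ) = 2λ − λ² and λ_{k,min} denotes the smallest eigenvalue of 𝒫_k⁻¹Ã. -/
/-!
Write `l(x) = 2x - x²`. The step of the recurrence is `Mₖ₊₁ = l(Mₖ)` for `Mₖ = 𝒫ₖ⁻¹Ã`, and the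
factorisation `l(μ) - l(M) = (μ - M)(2 - μ - M)` shows that `l(μ) ∈ σ(l(M))` exactly when `μ` or
its mirror image `2 - μ` lies in `σ(M)`. Every `Mₖ` is self-adjoint for the inner product given
by `Ã`, so `1 - l(Mₖ) = (1 - Mₖ)²` has nonnegative spectrum, i.e. `σ(Mₖ₊₁) ≤ 1`. Since `l` is
increasing on `(-∞, 1]` and `l(μ) = l(2 - μ)`, the smallest eigenvalue is carried to the smallest
eigenvalue from `k = 1` on. Finally `1 - l(x) = (1 - x)²`, so `1 - λₖ₊₁,min = (1 - λ₁,min)^(2^k)`.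
-/

open Matrix Filter Set

section SpectrumTwoSmulSubMulSelf

variable {R A : Type*} [CommRing R] [Ring A] [Algebra R A]

theorem algebraMap_two_mul_sub_sq_sub (a : A) (μ : R) :
    algebraMap R A (2 * μ - μ ^ 2) - (2 • a - a * a)
      = (algebraMap R A μ - a) * (algebraMap R A (2 - μ) - a) := by
  simp only [Algebra.algebraMap_eq_smul_one, sub_mul, mul_sub, smul_mul_assoc, mul_smul_comm,
    one_mul, mul_one]
  module

theorem two_mul_sub_sq_mem_spectrum_iff (a : A) (μ : R) :
    2 * μ - μ ^ 2 ∈ spectrum R (2 • a - a * a) ↔ μ ∈ spectrum R a ∨ 2 - μ ∈ spectrum R a := by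
  have hcomm : Commute (algebraMap R A μ - a) (algebraMap R A (2 - μ) - a) :=
    (Algebra.commute_algebraMap_right _ _).sub_right
      ((Algebra.commute_algebraMap_left _ _).sub_left (Commute.refl a))
  simp only [spectrum.mem_iff, algebraMap_two_mul_sub_sq_sub, hcomm.isUnit_mul_iff, not_and_or]

end SpectrumTwoSmulSubMulSelf

section SpectrumTwoSmulSubMulSelfReal

variable {A : Type*} [Ring A] [Algebra ℝ A]

theorem exists_mem_spectrum_of_mem_spectrum_two_smul_sub_mul_self {a : A} {ν : ℝ}
    (hν : ν ∈ spectrum ℝ (2 • a - a * a)) (hν₁ : ν ≤ 1) :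
    ∃ μ ∈ spectrum ℝ a, 2 * μ - μ ^ 2 = ν := by
  set μ := 1 - √(1 - ν)
  have hμ : 2 * μ - μ ^ 2 = ν := by
    have hsqrt := Real.sq_sqrt (sub_nonneg.2 hν₁)
    linear_combination -hsqrt
  rw [← hμ, two_mul_sub_sq_mem_spectrum_iff] at hν
  rcases hν with h | h
  · exact ⟨μ, h, hμ⟩
  · exact ⟨2 - μ, h, by linear_combination hμ⟩

theorem isLeast_spectrum_two_smul_sub_mul_self {a : A} {x : ℝ}
    (hx : IsLeast (spectrum ℝ a) x) (ha : spectrum ℝ a ⊆ Iic 1)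
    (hfa : spectrum ℝ (2 • a - a * a) ⊆ Iic 1) :
    IsLeast (spectrum ℝ (2 • a - a * a)) (2 * x - x ^ 2) := by
  refine ⟨(two_mul_sub_sq_mem_spectrum_iff a x).2 (Or.inl hx.1), fun ν hν => ?_⟩
  obtain ⟨μ, hμ, rfl⟩ := exists_mem_spectrum_of_mem_spectrum_two_smul_sub_mul_self hν (hfa hν)
  have hxμ : x ≤ μ := hx.2 hμ
  have hμ₁ : μ ≤ 1 := ha hμ
  nlinarith

end SpectrumTwoSmulSubMulSelfReal

section Matrix

variable {n : Type*} [Fintype n]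

theorem isSymm_two_smul_sub_mul_mul {α : Type*} [CommRing α] {P A : Matrix n n α}
    (hP : P.IsSymm) (hA : A.IsSymm) : (2 • P - P * A * P).IsSymm := by
  rw [IsSymm, transpose_sub, transpose_smul, transpose_mul, transpose_mul, hA.eq, hP.eq,
    Matrix.mul_assoc]

theorem two_smul_sub_mul_mul_mul {α : Type*} [Ring α] (P A : Matrix n n α) :
    (2 • P - P * A * P) * A = 2 • (P * A) - P * A * (P * A) := by
  rw [sub_mul, smul_mul_assoc, Matrix.mul_assoc _ P A]

variable [DecidableEq n]

theorem Matrix.exists_mulVec_eq_smul_of_mem_spectrum {K : Type*} [Field K] {M : Matrix n n K}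
    {μ : K} (hμ : μ ∈ spectrum K M) : ∃ v ≠ 0, M *ᵥ v = μ • v := by
  rw [← Matrix.spectrum_toLin', ← Module.End.hasEigenvalue_iff_mem_spectrum] at hμ
  obtain ⟨v, hv, hv0⟩ := hμ.exists_hasEigenvector
  exact ⟨v, hv0, by simpa using Module.End.mem_eigenspace_iff.1 hv⟩

theorem spectrum_mul_self_nonneg {A B : Matrix n n ℝ} (hA : A.PosDef) (hB : Bᵀ * A = A * B)
    {c : ℝ} (hc : c ∈ spectrum ℝ (B * B)) : 0 ≤ c := by
  obtain ⟨v, hv0, hv⟩ := Matrix.exists_mulVec_eq_smul_of_mem_spectrum hc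
  have hquad : c * (v ⬝ᵥ (A *ᵥ v)) = (B *ᵥ v) ⬝ᵥ (A *ᵥ (B *ᵥ v)) := by
    rw [← smul_eq_mul, ← dotProduct_smul, ← mulVec_smul, ← hv, ← mulVec_mulVec,
      mulVec_mulVec (B *ᵥ v) A, ← hB, ← mulVec_mulVec, dotProduct_mulVec v, vecMul_transpose]
  have hpos : 0 < v ⬝ᵥ (A *ᵥ v) := by simpa using hA.dotProduct_mulVec_pos hv0
  have hnonneg : 0 ≤ (B *ᵥ v) ⬝ᵥ (A *ᵥ (B *ᵥ v)) := by
    simpa using hA.posSemidef.dotProduct_mulVec_nonneg (B *ᵥ v)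
  exact nonneg_of_mul_nonneg_left (hquad ▸ hnonneg) hpos

theorem spectrum_two_smul_sub_mul_self_subset_Iic_one {A M : Matrix n n ℝ} (hA : A.PosDef)
    (hM : Mᵀ * A = A * M) : spectrum ℝ (2 • M - M * M) ⊆ Iic 1 := by
  intro ν hν
  have hsq : (1 - M) * (1 - M) = algebraMap ℝ _ 1 - (2 • M - M * M) := by
    rw [map_one]; noncomm_ring
  have h : 1 - ν ∈ spectrum ℝ ((1 - M) * (1 - M)) := by
    rw [hsq, ← spectrum.singleton_sub_eq]
    exact Set.sub_mem_sub rfl hν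
  refine sub_nonneg.1 (spectrum_mul_self_nonneg hA ?_ h)
  rw [transpose_sub, transpose_one, sub_mul, mul_sub, hM, one_mul, mul_one]

theorem spectrum_two_smul_sub_mul_mul_mul_subset_Iic_one {P A : Matrix n n ℝ} (hP : P.IsSymm)
    (hA : A.PosDef) : spectrum ℝ ((2 • P - P * A * P) * A) ⊆ Iic 1 := by
  rw [two_smul_sub_mul_mul_mul]
  refine spectrum_two_smul_sub_mul_self_subset_Iic_one hA ?_
  rw [transpose_mul, hP.eq, (isHermitian_iff_isSymm.1 hA.1).eq, Matrix.mul_assoc]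

end Matrix

theorem one_sub_eq_pow_of_two_mul_sub_sq {u : ℕ → ℝ} (hu : ∀ k, u (k + 1) = 2 * u k - u k ^ 2)
    (k : ℕ) : 1 - u k = (1 - u 0) ^ 2 ^ k := by
  induction k with
  | zero => simp
  | succ k ih => rw [hu, pow_succ 2 k, pow_mul, ← ih]; ring

theorem strictMono_of_two_mul_sub_sq {u : ℕ → ℝ} (hu : ∀ k, u (k + 1) = 2 * u k - u k ^ 2)
    (h0 : u 0 ∈ Ioo 0 1) : StrictMono u := by
  refine strictMono_nat_of_lt_succ fun k => ?_
  have hpow := pow_lt_pow_right_of_lt_one₀ (sub_pos.2 h0.2) (sub_lt_self 1 h0.1)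
    (Nat.pow_lt_pow_succ (a := 2) (n := k) one_lt_two)
  rw [← one_sub_eq_pow_of_two_mul_sub_sq hu, ← one_sub_eq_pow_of_two_mul_sub_sq hu] at hpow
  linarith

theorem tendsto_one_of_two_mul_sub_sq {u : ℕ → ℝ} (hu : ∀ k, u (k + 1) = 2 * u k - u k ^ 2)
    (h0 : u 0 ∈ Ioo 0 1) : Tendsto u atTop (nhds 1) := by
  have hpow : Tendsto (fun k => (1 - u 0) ^ 2 ^ k) atTop (nhds 0) :=
    (tendsto_pow_atTop_nhds_zero_of_lt_one (sub_nonneg.2 h0.2.le) (sub_lt_self 1 h0.1)).comp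
      (tendsto_pow_atTop_atTop_of_one_lt one_lt_two)
  have hu' : u = fun k => 1 - (1 - u 0) ^ 2 ^ k := by
    funext k; rw [← one_sub_eq_pow_of_two_mul_sub_sq hu]; ring
  rw [hu']
  simpa using tendsto_const_nhds.sub hpow

/-- Along the hyper-power preconditioner sequence (with `𝒫₀`, `Ã` SPD and
`σ(𝒫₀⁻¹Ã) ⊂ (0,2)`), the smallest eigenvalue satisfies
`λ_{k+1,min} = l(λ_{k,min})` for `k ≥ 1`, and the sequence `λ_{k,min}` (`k ≥ 1`)
is strictly increasing and converges to 1, where `l(λ) = 2λ − λ²`. -/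
theorem hyperpower_min_eigenvalue {N : ℕ}
    (P0 At : Matrix (Fin N) (Fin N) ℝ) (hP0 : P0.PosDef) (hAt : At.PosDef)
    (Pinv : ℕ → Matrix (Fin N) (Fin N) ℝ)
    (h0 : Pinv 0 = P0⁻¹)
    (hrec : ∀ k, Pinv (k + 1) = 2 • Pinv k - Pinv k * At * Pinv k)
    (hspec : spectrum ℝ (Pinv 0 * At) ⊆ Set.Ioo (0 : ℝ) 2)
    (lmin : ℕ → ℝ)
    (hmem : ∀ k, lmin k ∈ spectrum ℝ (Pinv k * At))
    (hmin : ∀ k, ∀ μ ∈ spectrum ℝ (Pinv k * At), lmin k ≤ μ)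
    (h1 : lmin 1 < 1) :
    (∀ k ≥ 1, lmin (k + 1) = 2 * lmin k - lmin k ^ 2) ∧
    (∀ k ≥ 1, lmin k < lmin (k + 1)) ∧
    Tendsto lmin atTop (nhds 1) := by
  have hAtT : At.IsSymm := isHermitian_iff_isSymm.1 hAt.1
  have hsymm : ∀ k, (Pinv k).IsSymm := by
    intro k
    induction k with
    | zero => rw [h0]; exact (isHermitian_iff_isSymm.1 hP0.1).inv
    | succ k ih => rw [hrec]; exact isSymm_two_smul_sub_mul_mul ih hAtT
  have hstep : ∀ k, Pinv (k + 1) * At = 2 • (Pinv k * At) - Pinv k * At * (Pinv k * At) :=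
    fun k => hrec k ▸ two_smul_sub_mul_mul_mul (Pinv k) At
  have hle : ∀ k, spectrum ℝ (Pinv (k + 1) * At) ⊆ Iic 1 :=
    fun k => hrec k ▸ spectrum_two_smul_sub_mul_mul_mul_subset_Iic_one (hsymm k) hAt
  have hleast : ∀ k, IsLeast (spectrum ℝ (Pinv k * At)) (lmin k) := fun k => ⟨hmem k, hmin k⟩
  have hlmin : ∀ k ≥ 1, lmin (k + 1) = 2 * lmin k - lmin k ^ 2 := by
    rintro (_ | k) hk
    · omega
    · refine (hleast _).unique ?_
      rw [hstep]
      exact isLeast_spectrum_two_smul_sub_mul_self (hleast _) (hle k) (hstep _ ▸ hle _)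
  have hlmin1 : 0 < lmin 1 := by
    obtain ⟨μ, hμ, hμ1⟩ := exists_mem_spectrum_of_mem_spectrum_two_smul_sub_mul_self
      (hstep 0 ▸ hmem 1) (hle 0 (hmem 1))
    obtain ⟨hμ0, hμ2⟩ := hspec hμ
    nlinarith
  have hshift : ∀ k, lmin (k + 1 + 1) = 2 * lmin (k + 1) - lmin (k + 1) ^ 2 :=
    fun k => hlmin (k + 1) k.succ_pos
  refine ⟨hlmin, fun k hk => ?_, (tendsto_add_atTop_iff_nat 1).1
    (tendsto_one_of_two_mul_sub_sq (u := fun k => lmin (k + 1)) hshift ⟨hlmin1, h1⟩)⟩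
  obtain ⟨k, rfl⟩ := Nat.exists_eq_add_of_le' hk
  exact strictMono_of_two_mul_sub_sq (u := fun k => lmin (k + 1)) hshift ⟨hlmin1, h1⟩
    k.lt_succ_self
end
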